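/- The map sending an NE-path (given as the sequence of endpoints (x_i, y_i), i = 1..k, of its k east steps) to the tuple (x_1+y_1, ..., x_k+y_k) is a bijection from the set of t-admissible NE-paths from (0,0) to (k, n-k) onto the set of t-admissible (n,k)-columnar tableaux. -/

import Mathlib

/-! A path is determined by the positions of its east steps, and the `j`-th east step, ending at
`(x_j, y_j)`, is step number `x_j + y_j`. Admissibility is decided by peeling off the first step:
an east step brings the forbidden line `y = x - t` one unit closer (`t ↦ t - 1`), a north step
moves it one unit away (`t ↦ t + 1`). The condition `2 j < T_j + t` on the positions obeys the same
recursion, and for strictly increasing positive tuples it is the columnar condition. -/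

/-- An NE-path from (0,0) to (k, n-k) is encoded as a list of `n` booleans
(`true` = east step, `false` = north step) with exactly `k` east steps; after a
prefix `p`, the path is at the lattice point `(p.count true, p.count false)`.
It is t-admissible when it never touches the line `y = x - t`. -/
def pathSet (t n k : ℕ) : Set (List Bool) :=
  {l | l.length = n ∧ l.count true = k ∧
    ∀ p ∈ l.inits, ((p.count false : ℤ)) ≠ (p.count true : ℤ) - t}

/-- The (1-based) positions of the east steps of the path `l`; the `j`-th east
step ends at the point `(x_j, y_j)` with `x_j + y_j` equal to the `j`-th entry
of this list.  -/
def eastSums (l : List Bool) : List ℕ :=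
  ((List.range l.length).filter fun i => l.getD i false).map (· + 1)

lemma eastSums_cons (b : Bool) (l : List Bool) :
    eastSums (b :: l) = (if b then [1] else []) ++ (eastSums l).map (· + 1) := by
  unfold eastSums
  simp only [List.length_cons, List.range_succ_eq_map, List.filter_cons, List.getD_cons_zero,
    List.filter_map, List.map_map]
  cases b <;> simp [Function.comp_def]

lemma length_eastSums (l : List Bool) : (eastSums l).length = l.count true := by
  induction l with
  | nil => rfl
  | cons b l ih => cases b <;> simp [eastSums_cons, ih]

lemma mem_eastSums {l : List Bool} {x : ℕ} :
    x ∈ eastSums l ↔ ∃ i, ∃ h : i < l.length, l[i] = true ∧ i + 1 = x := by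
  simp only [eastSums, List.mem_map, List.mem_filter, List.mem_range]
  exact exists_congr fun i => ⟨fun ⟨⟨h, hi⟩, hx⟩ => ⟨h, by simpa [h] using hi, hx⟩,
    fun ⟨h, hi, hx⟩ => ⟨⟨h, by simpa [h] using hi⟩, hx⟩⟩

lemma sortedLT_eastSums (l : List Bool) : (eastSums l).SortedLT :=
  (List.pairwise_map.2 ((List.pairwise_lt_range.filter _).imp (by omega))).sortedLT

def ofEastSums (n : ℕ) (S : List ℕ) : List Bool :=
  (List.range n).map fun i => decide (i + 1 ∈ S)

lemma ofEastSums_eastSums (l : List Bool) : ofEastSums l.length (eastSums l) = l := by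
  refine List.ext_getElem (by simp [ofEastSums]) fun i _ hi => ?_
  simp [ofEastSums, mem_eastSums, hi]

lemma eastSums_ofEastSums {n : ℕ} {S : List ℕ} (hS : S.SortedLT) (hmem : ∀ x ∈ S, 1 ≤ x ∧ x ≤ n) :
    eastSums (ofEastSums n S) = S := by
  refine (sortedLT_eastSums _).eq_of_mem_iff hS fun x => ?_
  simp only [mem_eastSums, ofEastSums, List.length_map, List.length_range, List.getElem_map,
    List.getElem_range, decide_eq_true_eq]
  refine ⟨fun ⟨i, _, hi, hx⟩ => hx ▸ hi, fun hx => ?_⟩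
  obtain ⟨hx1, hxn⟩ := hmem x hx
  exact ⟨x - 1, by omega, by rwa [Nat.sub_add_cancel hx1], by omega⟩

theorem bijOn_eastSums (n : ℕ) :
    Set.BijOn eastSums {l | l.length = n} {S | S.SortedLT ∧ ∀ x ∈ S, 1 ≤ x ∧ x ≤ n} := by
  refine ⟨fun l hl => ⟨sortedLT_eastSums l, fun x hx => ?_⟩, fun l₁ hl₁ l₂ hl₂ h => ?_,
    fun S ⟨hS, hmem⟩ => ⟨ofEastSums n S, by simp [ofEastSums], eastSums_ofEastSums hS hmem⟩⟩
  · obtain ⟨i, hi, -, rfl⟩ := mem_eastSums.1 hx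
    exact ⟨by omega, by simp_all⟩
  · rw [← ofEastSums_eastSums l₁, ← ofEastSums_eastSums l₂, h, hl₁, hl₂]

-- `t` ranges over `ℤ` because removing the first step of a path shifts the line.
def Admissible (t : ℤ) (l : List Bool) : Prop :=
  ∀ p ∈ l.inits, (p.count false : ℤ) ≠ p.count true - t

lemma admissible_cons {t : ℤ} (b : Bool) (l : List Bool) :
    Admissible t (b :: l) ↔ t ≠ 0 ∧ Admissible (if b then t - 1 else t + 1) l := by
  simp only [Admissible, List.inits_cons, List.forall_mem_cons, List.forall_mem_map]
  refine and_congr (by simp) (forall₂_congr fun p _ => ?_)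
  cases b <;> simp only [List.count_cons_self, List.count_cons_of_ne, ne_eq, Bool.true_eq_false,
    Bool.false_eq_true, not_false_eq_true, Nat.cast_add, Nat.cast_one, ↓reduceIte] <;> omega

lemma not_admissible_zero (l : List Bool) : ¬ Admissible 0 l :=
  fun h => h [] (by simp) (by simp)

def AdmissibleSums (t : ℤ) (S : List ℕ) : Prop :=
  ∀ i (h : i < S.length), 2 * (i + 1 : ℤ) < S[i] + t

lemma admissibleSums_cons {t : ℤ} (x : ℕ) (S : List ℕ) :
    AdmissibleSums t (x :: S) ↔ 2 < x + t ∧ AdmissibleSums (t - 2) S := by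
  simp only [AdmissibleSums, List.length_cons, Nat.forall_lt_succ_left', List.getElem_cons_zero,
    List.getElem_cons_succ]
  refine and_congr (by simp) (forall₂_congr fun i _ => ?_)
  push_cast; omega

lemma admissibleSums_map_succ {t : ℤ} (S : List ℕ) :
    AdmissibleSums t (S.map (· + 1)) ↔ AdmissibleSums (t + 1) S := by
  simp only [AdmissibleSums, List.length_map, List.getElem_map]
  refine forall₂_congr fun i _ => ?_
  push_cast; omega

theorem admissible_iff_admissibleSums (l : List Bool) {t : ℤ} (ht : 0 < t) :
    Admissible t l ↔ AdmissibleSums t (eastSums l) := by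
  induction l generalizing t with
  | nil => simpa [Admissible, AdmissibleSums, eastSums] using ht.ne'
  | cons b l ih =>
    rw [admissible_cons, eastSums_cons]
    cases b with
    | false => simp [ht.ne', admissibleSums_map_succ, ih (by omega : 0 < t + 1)]
    | true =>
      simp only [if_true, List.singleton_append, admissibleSums_cons, admissibleSums_map_succ]
      rcases (by omega : t = 1 ∨ 1 < t) with rfl | ht1
      · simp [not_admissible_zero]
      · simp [ht.ne', ih (by omega : 0 < t - 1), show t - 2 + 1 = t - 1 by ring,
          show (2 : ℤ) < 1 + t by omega]

lemma ofFn_getD {α : Type*} {k : ℕ} {S : List α} (hS : S.length = k) (d : α) :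
    List.ofFn (fun j : Fin k => S.getD j d) = S :=
  List.ext_getElem (by simp [hS]) fun i _ hi => by simp [List.getElem?_eq_getElem hi]

theorem bijOn_getD_of_length_eq {α : Type*} (k : ℕ) (d : α) (P : List α → Prop) :
    Set.BijOn (fun S (j : Fin k) => S.getD j d) {S | S.length = k ∧ P S}
      {T | P (List.ofFn T)} := by
  refine ⟨fun S ⟨hS, hP⟩ => ?_, fun S₁ ⟨h₁, _⟩ S₂ ⟨h₂, _⟩ h => ?_, fun T hT => ?_⟩
  · rwa [Set.mem_ofPred_eq, ofFn_getD hS]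
  · rw [← ofFn_getD h₁ d, ← ofFn_getD h₂ d]
    exact congrArg List.ofFn h
  · exact ⟨List.ofFn T, ⟨List.length_ofFn, hT⟩, funext fun j => by simp⟩

lemma succ_le_of_strictMono {k : ℕ} {T : Fin k → ℕ} (hT : StrictMono T) (hpos : ∀ i, 1 ≤ T i) :
    ∀ i (hi : i < k), i + 1 ≤ T ⟨i, hi⟩ := by
  intro i hi
  induction i with
  | zero => exact hpos _
  | succ i ih => exact (ih (by omega)).trans_lt (hT (Fin.mk_lt_mk.2 i.lt_succ_self))

lemma columnar_iff_admissibleSums {k t : ℕ} (ht : 0 < t) {T : Fin k → ℕ} (hT : StrictMono T)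
    (hpos : ∀ i, 1 ≤ T i) :
    (∀ j : ℕ, ∀ _ : 1 ≤ j, ∀ _ : j + t ≤ k + 1, t - 1 + 2 * j ≤ T ⟨t + j - 2, by omega⟩) ↔
      AdmissibleSums t (List.ofFn T) := by
  simp only [AdmissibleSums, List.length_ofFn, List.getElem_ofFn]
  constructor
  · intro h i hi
    rcases Nat.lt_or_ge i (t - 1) with hit | hit
    · have := succ_le_of_strictMono hT hpos i hi
      omega
    · have := h (i + 2 - t) (by omega) (by omega)
      simp only [show t + (i + 2 - t) - 2 = i by omega] at this
      omega
  · intro h j hj hjt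
    have := h (t + j - 2) (by omega)
    omega

/-- The map sending an NE-path to the tuple `(x_1+y_1, …, x_k+y_k)` of coordinate
sums of the endpoints of its `k` east steps is a bijection from the t-admissible
NE-paths from (0,0) to (k,n-k) onto the t-admissible (n,k)-columnar tableaux. -/
theorem stmt6 (t n k : ℕ) (ht : 0 < t) :
    Set.BijOn (fun (l : List Bool) (j : Fin k) => (eastSums l).getD (j : ℕ) 0)
      (pathSet t n k)
      {T : Fin k → ℕ |
        StrictMono T ∧ (∀ i, 1 ≤ T i ∧ T i ≤ n) ∧
        (∀ j : ℕ, ∀ _ : 1 ≤ j, ∀ _ : j + t ≤ k + 1,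
          t - 1 + 2 * j ≤ T ⟨t + j - 2, by omega⟩)} := by
  let Tableau (S : List ℕ) : Prop := S.SortedLT ∧ (∀ x ∈ S, 1 ≤ x ∧ x ≤ n) ∧ AdmissibleSums t S
  have hpaths : pathSet t n k =
      {l | l.length = n} ∩ eastSums ⁻¹' {S | S.length = k ∧ AdmissibleSums t S} := by
    ext l
    simp only [pathSet, Set.mem_inter_iff, Set.mem_preimage, Set.mem_ofPred_eq, length_eastSums,
      ← admissible_iff_admissibleSums l (Int.natCast_pos.2 ht)]
    rfl
  have htableaux : {T : Fin k → ℕ | StrictMono T ∧ (∀ i, 1 ≤ T i ∧ T i ≤ n) ∧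
      (∀ j : ℕ, ∀ _ : 1 ≤ j, ∀ _ : j + t ≤ k + 1, t - 1 + 2 * j ≤ T ⟨t + j - 2, by omega⟩)} =
      {T | Tableau (List.ofFn T)} := by
    ext T
    simp only [Tableau, Set.mem_ofPred_eq, List.sortedLT_ofFn_iff, List.forall_mem_ofFn_iff]
    exact and_congr_right fun hT => and_congr_right fun hbd =>
      columnar_iff_admissibleSums ht hT fun i => (hbd i).1
  have heast : Set.BijOn eastSums (pathSet t n k) {S | S.length = k ∧ Tableau S} := by
    rw [hpaths]
    convert (bijOn_eastSums n).inter_mapsTo (Set.mapsTo_preimage _ _) Set.inter_subset_right using 1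
    ext S
    simp only [Tableau, Set.mem_inter_iff, Set.mem_ofPred_eq]
    tauto
  rw [htableaux]
  exact (bijOn_getD_of_length_eq k 0 Tableau).comp heast
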